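/- arXiv:2412.07098 — 5 statements merged into one kernel-verified Lean document; each statement's English description precedes it below -/
import Mathlib

section
/- For every R ∈ ℕ, the number of spin-flip collections γ with min γ ≤ 0 ≤ max γ (equivalently 0 ∈ V(γ)) and cover size 𝒩(γ) ≤ R is at most e^{(5/2)(log 2)·R}. -/
/-!
Write `γ = {m, m + g₁, m + g₁ + g₂, …}` with positive gaps `gᵢ`. At scale `n`, the points of `γ`
that precede a gap `≥ 2ⁿ`, together with `max γ`, are pairwise `2ⁿ` apart, so no interval of
`𝒾ₙ(γ)` contains two of them: `|𝒾ₙ(γ)| ≥ 1 + #{i | gᵢ ≥ 2ⁿ}`. Summing over `n ≤ n₀(γ)` gives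
`𝒩(γ) ≥ (n₀(γ) + 1) + ∑ size gᵢ ≥ size (-m) + ∑ size gᵢ` when `min γ < 0 ≤ max γ`, where
`size` is the binary length. Hence `γ` is determined by a list `(-m, g₁, g₂, …)` of positive
integers of total binary length `≤ R`; there are at most `4 ^ R ≤ 2 ^ (5R/2)` such lists.
-/

noncomputable section

/-! An integer `k : ℤ` encodes the dual-lattice site (spin flip) `k + 1/2 ∈ ℤ + 1/2`;
a spin-flip collection is a finite set `γ : Finset ℤ` of even cardinality. -/

/-- Auxiliary greedy construction of the canonical cover (with fuel). -/
def coverAux (n : ℕ) : ℕ → Finset ℤ → Finset ℤ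
  | 0, _ => ∅
  | fuel + 1, γ =>
    if h : γ.Nonempty then
      insert (γ.min' h) (coverAux n fuel (γ.filter fun x => γ.min' h + 2 ^ n ≤ x))
    else ∅

/-- The left endpoints of the intervals of the canonical greedy cover `𝒾ₙ(γ)` of `γ` by
open intervals of diameter `2^n` with integer endpoints: `u ∈ cover n γ` encodes the
interval `(u, u + 2^n)`, which covers the spin flips `k + 1/2` with `u ≤ k < u + 2^n`. -/
def cover (n : ℕ) (γ : Finset ℤ) : Finset ℤ := coverAux n γ.card γ

/-- The diameter of `γ` (as a subset of `ℤ + 1/2`). -/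
def diamZ (γ : Finset ℤ) : ℤ := WithBot.unbotD 0 γ.max - WithTop.untopD 0 γ.min

/-- `n₀(γ) = ⌊log₂ diam γ⌋`. -/
def n0 (γ : Finset ℤ) : ℕ := Nat.log 2 (diamZ γ).toNat

/-- The cover size `𝒩(γ) = ∑_{n=0}^{n₀(γ)} |𝒾ₙ(γ)|`. -/
def coverSize (γ : Finset ℤ) : ℕ := ∑ n ∈ Finset.range (n0 γ + 1), (cover n γ).card

/-- The volume `V(γ) = [min γ, max γ] ∩ ℤ` (recall `k` encodes `k + 1/2`). -/
def vol (γ : Finset ℤ) : Finset ℤ := Finset.Icc (WithTop.untopD 0 γ.min + 1) (WithBot.unbotD 0 γ.max)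

open Finset

theorem Finset.card_le_card_of_separated_of_covered {α : Type*} [LinearOrder α] [Add α]
    [AddRightMono α] {T C : Finset α} {d : α}
    (hsep : ∀ x ∈ T, ∀ y ∈ T, x < y → x + d ≤ y) (hcov : ∀ x ∈ T, ∃ u ∈ C, u ≤ x ∧ x < u + d) :
    T.card ≤ C.card := by
  choose! f hfC hf using hcov
  have hf_ne : ∀ x ∈ T, ∀ y ∈ T, x < y → f x ≠ f y := fun x hx y hy hxy hfxy =>
    ((hf y hy).2.trans_le (hfxy ▸ add_le_add_left (hf x hx).1 d)).not_ge (hsep x hx y hy hxy)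
  refine card_le_card_of_injOn f hfC fun x hx y hy hfxy => ?_
  by_contra hne
  rcases lt_or_gt_of_ne hne with hlt | hlt
  · exact hf_ne x hx y hy hlt hfxy
  · exact hf_ne y hy x hx hlt hfxy.symm

lemma exists_mem_coverAux (n : ℕ) : ∀ (fuel : ℕ) (γ : Finset ℤ), γ.card ≤ fuel →
    ∀ x ∈ γ, ∃ u ∈ coverAux n fuel γ, u ≤ x ∧ x < u + 2 ^ n
  | 0, γ, hcard, x, hx => by simp_all
  | fuel + 1, γ, hcard, x, hx => by
    have hγ : γ.Nonempty := ⟨x, hx⟩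
    rw [coverAux, dif_pos hγ]
    set m := γ.min' hγ
    by_cases hxm : x < m + 2 ^ n
    · exact ⟨m, mem_insert_self _ _, min'_le γ x hx, hxm⟩
    · have hrest : (γ.filter fun y => m + 2 ^ n ≤ y).card ≤ fuel := by
        have : γ.filter (fun y => m + 2 ^ n ≤ y) ⊂ γ :=
          filter_ssubset.2 ⟨m, min'_mem _ _, by simp [pow_pos]⟩
        have := card_lt_card this
        omega
      obtain ⟨u, hu, hux⟩ :=
        exists_mem_coverAux n fuel _ hrest x (mem_filter.2 ⟨hx, not_lt.1 hxm⟩)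
      exact ⟨u, mem_insert_of_mem hu, hux⟩

lemma card_le_card_cover {n : ℕ} {γ T : Finset ℤ} (hT : T ⊆ γ)
    (hsep : ∀ x ∈ T, ∀ y ∈ T, x < y → x + 2 ^ n ≤ y) : T.card ≤ (cover n γ).card :=
  card_le_card_of_separated_of_covered hsep fun x hx =>
    exists_mem_coverAux n _ γ le_rfl x (hT hx)

def ofGaps : ℤ → List ℕ → Finset ℤ
  | m, [] => {m}
  | m, g :: gs => insert m (ofGaps (m + g) gs)

lemma self_mem_ofGaps (m : ℤ) (gs : List ℕ) : m ∈ ofGaps m gs := by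
  cases gs <;> simp [ofGaps]

lemma add_sum_mem_ofGaps : ∀ (m : ℤ) (gs : List ℕ), m + gs.sum ∈ ofGaps m gs
  | m, [] => by simp [ofGaps]
  | m, g :: gs => by
    have := add_sum_mem_ofGaps (m + g) gs
    simp only [ofGaps, List.sum_cons, Nat.cast_add, mem_insert]
    exact Or.inr (by rwa [← add_assoc])

lemma ofGaps_subset_Icc : ∀ (m : ℤ) (gs : List ℕ), ofGaps m gs ⊆ Icc m (m + gs.sum)
  | m, [] => by simp [ofGaps]
  | m, g :: gs => by
    intro x hx
    rcases mem_insert.1 hx with rfl | hx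
    · exact mem_Icc.2 ⟨le_rfl, by omega⟩
    · have := mem_Icc.1 (ofGaps_subset_Icc (m + g) gs hx)
      simp only [List.sum_cons, Nat.cast_add, mem_Icc]
      omega

lemma min_ofGaps (m : ℤ) (gs : List ℕ) : (ofGaps m gs).min = m :=
  le_antisymm (Finset.min_le (self_mem_ofGaps m gs))
    (Finset.le_min fun _ hx => WithTop.coe_le_coe.2 (mem_Icc.1 (ofGaps_subset_Icc m gs hx)).1)

lemma max_ofGaps (m : ℤ) (gs : List ℕ) : (ofGaps m gs).max = ↑(m + gs.sum) :=
  le_antisymm (Finset.max_le fun _ hx => WithBot.coe_le_coe.2 (mem_Icc.1 (ofGaps_subset_Icc m gs hx)).2)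
    (Finset.le_max (add_sum_mem_ofGaps m gs))

lemma diamZ_ofGaps (m : ℤ) (gs : List ℕ) : diamZ (ofGaps m gs) = gs.sum := by
  rw [diamZ, min_ofGaps, max_ofGaps, WithBot.unbotD_coe, WithTop.untopD_coe, add_sub_cancel_left]

lemma vol_ofGaps (m : ℤ) (gs : List ℕ) : vol (ofGaps m gs) = Icc (m + 1) (m + gs.sum) := by
  rw [vol, min_ofGaps, max_ofGaps, WithBot.unbotD_coe, WithTop.untopD_coe]

lemma exists_eq_ofGaps {γ : Finset ℤ} (hγ : γ.Nonempty) :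
    ∃ m gs, (∀ g ∈ gs, 0 < g) ∧ γ = ofGaps m gs := by
  induction γ using Finset.induction_on_min with
  | empty => simp at hγ
  | insert a s has ih =>
    rcases s.eq_empty_or_nonempty with rfl | hs
    · exact ⟨a, [], by simp, by simp [ofGaps]⟩
    obtain ⟨m, gs, hgs, rfl⟩ := ih hs
    have ham := has m (self_mem_ofGaps m gs)
    refine ⟨a, (m - a).toNat :: gs, ?_, ?_⟩
    · simpa [ham] using hgs
    · rw [ofGaps, Int.toNat_of_nonneg (by omega), add_sub_cancel]

lemma exists_separated_subset_ofGaps {d : ℕ} (hd : 0 < d) : ∀ (m : ℤ) (gs : List ℕ),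
    ∃ T ⊆ ofGaps m gs, (∀ x ∈ T, ∀ y ∈ T, x < y → x + d ≤ y) ∧
      T.card = 1 + gs.countP (d ≤ ·)
  | m, [] => ⟨{m}, by simp [ofGaps], by simp, by simp⟩
  | m, g :: gs => by
    obtain ⟨T, hTsub, hTsep, hTcard⟩ := exists_separated_subset_ofGaps hd (m + g) gs
    have hT : ∀ x ∈ T, m + g ≤ x := fun x hx => (mem_Icc.1 (ofGaps_subset_Icc _ _ (hTsub hx))).1
    by_cases hg : d ≤ g
    · have hgZ : (d : ℤ) ≤ g := by exact_mod_cast hg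
      have hmT : m ∉ T := fun hm => by have := hT m hm; omega
      refine ⟨insert m T, insert_subset_insert _ hTsub, ?_, ?_⟩
      · intro x hx y hy hxy
        rw [mem_insert] at hx hy
        rcases hx with rfl | hx <;> rcases hy with rfl | hy
        · omega
        · have := hT y hy; omega
        · have := hT x hx; omega
        · exact hTsep x hx y hy hxy
      · simp only [card_insert_of_notMem hmT, hTcard, hg, decide_true, List.countP_cons_of_pos]
        omega
    · exact ⟨T, hTsub.trans (subset_insert _ _), hTsep, by simp [hTcard, hg]⟩

lemma one_add_countP_le_card_cover (n : ℕ) (m : ℤ) (gs : List ℕ) :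
    1 + gs.countP (2 ^ n ≤ ·) ≤ (cover n (ofGaps m gs)).card := by
  obtain ⟨T, hT, hsep, hcard⟩ := exists_separated_subset_ofGaps (Nat.two_pow_pos n) m gs
  rw [← hcard]
  exact card_le_card_cover hT (by exact_mod_cast hsep)

lemma sum_range_countP_eq_sum_size {N : ℕ} : ∀ {gs : List ℕ}, (∀ g ∈ gs, g < 2 ^ N) →
    ∑ n ∈ range N, gs.countP (2 ^ n ≤ ·) = (gs.map Nat.size).sum
  | [], _ => by simp
  | g :: gs, h => by
    have hg : ∑ n ∈ range N, (if 2 ^ n ≤ g then 1 else 0) = g.size := by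
      have : (range N).filter (2 ^ · ≤ g) = range g.size := by
        ext n
        have := Nat.size_le.2 (h g (by simp))
        simp only [mem_filter, mem_range, ← Nat.lt_size]
        omega
      rw [sum_boole, this, card_range, Nat.cast_id]
    simp only [List.countP_cons, sum_add_distrib, List.map_cons, List.sum_cons,
      sum_range_countP_eq_sum_size fun x hx => h x (List.mem_cons_of_mem g hx)]
    simp only [decide_eq_true_eq, hg]
    omega

lemma n0_add_one_add_sum_size_le_coverSize (m : ℤ) (gs : List ℕ) :
    n0 (ofGaps m gs) + 1 + (gs.map Nat.size).sum ≤ coverSize (ofGaps m gs) := by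
  have hlt : ∀ g ∈ gs, g < 2 ^ (n0 (ofGaps m gs) + 1) := fun g hg => by
    rw [n0, diamZ_ofGaps, Int.toNat_natCast]
    exact (List.le_sum_of_mem hg).trans_lt (Nat.lt_pow_succ_log_self one_lt_two _)
  calc n0 (ofGaps m gs) + 1 + (gs.map Nat.size).sum
      = ∑ n ∈ range (n0 (ofGaps m gs) + 1), (1 + gs.countP (2 ^ n ≤ ·)) := by
        rw [sum_add_distrib, sum_range_countP_eq_sum_size hlt]
        simp
    _ ≤ coverSize (ofGaps m gs) := sum_le_sum fun n _ => one_add_countP_le_card_cover n m gs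

def consBit (b : Bool) : List ℕ → List ℕ
  | [] => []
  | y :: l => Nat.bit b y :: l

/-- Contains every list of positive integers of total bit length at most `R`: such a list is empty,
starts with `1`, or is obtained by `consBit` from a list of total bit length one less. -/
def boundedSizeLists : ℕ → Finset (List ℕ)
  | 0 => {[]}
  | R + 1 => insert [] ((boundedSizeLists R).image (1 :: ·) ∪
      (boundedSizeLists R).image (consBit false) ∪ (boundedSizeLists R).image (consBit true))

lemma card_boundedSizeLists_le : ∀ R, (boundedSizeLists R).card ≤ 4 ^ R
  | 0 => by simp [boundedSizeLists]
  | R + 1 => by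
    have ih := card_boundedSizeLists_le R
    have h4 := Nat.one_le_pow R 4 (by norm_num)
    calc (boundedSizeLists (R + 1)).card
        ≤ 1 + ((boundedSizeLists R).card + (boundedSizeLists R).card +
            (boundedSizeLists R).card) := by
          rw [boundedSizeLists]
          refine (card_insert_le _ _).trans ?_
          rw [add_comm 1]
          gcongr
          exact (card_union_le _ _).trans (add_le_add ((card_union_le _ _).trans
            (add_le_add card_image_le card_image_le)) card_image_le)
      _ ≤ 4 ^ (R + 1) := by rw [pow_succ]; omega

lemma mem_boundedSizeLists : ∀ {R : ℕ} {l : List ℕ}, (∀ x ∈ l, 0 < x) →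
    (l.map Nat.size).sum ≤ R → l ∈ boundedSizeLists R
  | R, [], _, _ => by cases R <;> simp [boundedSizeLists]
  | 0, x :: l, hpos, hR => by
    have := Nat.size_pos.2 (hpos x (by simp))
    simp at hR
    omega
  | R + 1, x :: l, hpos, hR => by
    rw [boundedSizeLists]
    simp only [List.map_cons, List.sum_cons] at hR
    obtain ⟨b, y, rfl⟩ : ∃ b y, Nat.bit b y = x := ⟨_, _, Nat.bit_testBit_zero_shiftRight_one x⟩
    rcases Nat.eq_zero_or_pos y with rfl | hy
    · have hb : Nat.bit b 0 = 1 := by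
        have := hpos (Nat.bit b 0) (by simp)
        cases b <;> simp_all [Nat.bit_val]
      rw [hb] at hR ⊢
      refine mem_insert_of_mem (mem_union_left _ (mem_union_left _ (mem_image_of_mem _ ?_)))
      exact mem_boundedSizeLists (fun z hz => hpos z (by simp [hz])) (by simp at hR; omega)
    · have hyl : y :: l ∈ boundedSizeLists R := by
        refine mem_boundedSizeLists (fun z hz => ?_) ?_
        · rcases List.mem_cons.1 hz with rfl | hz
          exacts [hy, hpos z (by simp [hz])]
        · rw [Nat.size_bit (by simp [Nat.bit_eq_zero_iff, hy.ne'])] at hR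
          simp only [List.map_cons, List.sum_cons]
          omega
      refine mem_insert_of_mem ?_
      cases b
      · exact mem_union_left _ (mem_union_right _ (mem_image_of_mem (consBit false) hyl))
      · exact mem_union_right _ (mem_image_of_mem (consBit true) hyl)

lemma exists_mem_boundedSizeLists {γ : Finset ℤ} {R : ℕ} (hγ : γ.Nonempty) (h0 : 0 ∈ vol γ)
    (hR : coverSize γ ≤ R) : ∃ l ∈ boundedSizeLists R, ofGaps (-l.headI) l.tail = γ := by
  obtain ⟨m, gs, hgs, rfl⟩ := exists_eq_ofGaps hγ
  rw [vol_ofGaps, mem_Icc] at h0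
  have ha : (-m).toNat ≤ gs.sum := by omega
  have hsize : Nat.size (-m).toNat ≤ n0 (ofGaps m gs) + 1 := by
    rw [Nat.size_le, n0, diamZ_ofGaps, Int.toNat_natCast]
    exact ha.trans_lt (Nat.lt_pow_succ_log_self one_lt_two _)
  refine ⟨(-m).toNat :: gs, mem_boundedSizeLists ?_ ?_, ?_⟩
  · intro x hx
    rcases List.mem_cons.1 hx with rfl | hx
    exacts [by omega, hgs x hx]
  · have := n0_add_one_add_sum_size_le_coverSize m gs
    simp only [List.map_cons, List.sum_cons]
    omega
  · simp only [List.headI_cons, List.tail_cons]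
    congr
    omega

lemma four_pow_le_exp (R : ℕ) : (4 : ℝ) ^ R ≤ Real.exp (5 / 2 * Real.log 2 * R) := by
  have h4 : (4 : ℝ) = Real.exp (2 * Real.log 2) := by
    rw [← Real.log_rpow two_pos, Real.exp_log (by positivity)]; norm_num
  rw [h4, ← Real.exp_nat_mul, Real.exp_le_exp]
  have := Real.log_nonneg one_le_two
  nlinarith [(Nat.cast_nonneg R : (0 : ℝ) ≤ R)]

/-- entropy bound (Theorem `entropication`): the number of spin-flip
collections `γ` with `0 ∈ V(γ)` and `𝒩(γ) ≤ R` is at most `e^{(5/2)(log 2) R}`. -/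
theorem entropy_bound (R : ℕ) :
    {γ : Finset ℤ | γ.Nonempty ∧ Even γ.card ∧ (0 : ℤ) ∈ vol γ ∧ coverSize γ ≤ R}.Finite ∧
      (({γ : Finset ℤ | γ.Nonempty ∧ Even γ.card ∧ (0 : ℤ) ∈ vol γ ∧
          coverSize γ ≤ R}.ncard : ℝ) ≤ Real.exp (5 / 2 * Real.log 2 * R)) := by
  set S := {γ : Finset ℤ | γ.Nonempty ∧ Even γ.card ∧ (0 : ℤ) ∈ vol γ ∧ coverSize γ ≤ R}
  set E := (boundedSizeLists R).image fun l => ofGaps (-l.headI) l.tail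
  have hSE : S ⊆ E := by
    rintro γ ⟨hγ, -, h0, hR⟩
    obtain ⟨l, hl, rfl⟩ := exists_mem_boundedSizeLists hγ h0 hR
    exact mem_coe.2 (mem_image_of_mem _ hl)
  refine ⟨E.finite_toSet.subset hSE, ?_⟩
  calc (S.ncard : ℝ) ≤ E.card := by
        exact_mod_cast (Set.ncard_le_ncard hSE E.finite_toSet).trans (Set.ncard_coe_finset E).le
    _ ≤ (4 : ℝ) ^ R := by exact_mod_cast card_image_le.trans (card_boundedSizeLists_le R)
    _ ≤ _ := four_pow_le_exp R
end
end

section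
/- Let h:ℤ→ℝ_{≥0}, let Γ be a well-ordered finite family of pairwise disjoint spin-flip collections, and let γ ∈ Γ be external. Then |E_h(Γ) − E_h(Γ∖{γ})| ≤ E_h(γ), where E_h(γ) = 2∑_{x∈I₋(γ)} h_x and E_h(Γ) = 2∑_{x∈N(Γ)} h_x. -/
noncomputable section
open scoped Classical

/-! An integer `k : ℤ` encodes the dual-lattice site (spin flip) `k + 1/2 ∈ ℤ + 1/2`. -/

/-- The number of spin flips of `γ` lying strictly to the right of the integer site `x`. -/
def cntR (γ : Finset ℤ) (x : ℤ) : ℕ := (γ.filter fun k => x ≤ k).card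

/-- The minus-interior `I₋(γ)`: the integers `x` such that the number of spin flips of
`γ` to the right of `x` is odd. -/
def Iminus (γ : Finset ℤ) : Finset ℤ :=
  (Finset.Icc (WithTop.untopD 0 γ.min) (WithBot.unbotD 0 γ.max)).filter fun x => Odd (cntR γ x)

/-- `γ < γ'`: `γ` is contained in the open interval between two consecutive spin flips
of `γ'`. -/
def ltC (γ γ' : Finset ℤ) : Prop :=
  ∃ u ∈ γ', ∃ v ∈ γ', u < v ∧ (∀ w ∈ γ', ¬(u < w ∧ w < v)) ∧ ∀ x ∈ γ, u < x ∧ x < v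

/-- `Γ` is a well-ordered finite family of pairwise disjoint spin-flip collections. -/
def WellOrdered (Γ : Finset (Finset ℤ)) : Prop :=
  (∀ g ∈ Γ, g.Nonempty ∧ Even g.card) ∧ (Γ : Set (Finset ℤ)).PairwiseDisjoint id ∧
    ∀ g ∈ Γ, ∀ g' ∈ Γ, g ≠ g' → ¬ltC g g' → ¬ltC g' g → Disjoint (vol g) (vol g')

/-- `N(Γ)`: the integers `x` such that the number of spin flips of `⋃Γ` to the right of
`x` is odd. -/
def NSet (Γ : Finset (Finset ℤ)) : Finset ℤ := Iminus (Γ.sup id)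

/-! Every collection has an even number of flips, so `x ∈ N(Γ)` only depends on the parity of
the flips to the right of `x`, which is additive over disjoint collections. Hence
`N(Γ) = I₋(γ) ∆ N(Γ ∖ {γ})`, and for `h ≥ 0` passing to a symmetric difference with `I₋(γ)`
moves a sum by at most the sum over `I₋(γ)`. -/

open scoped symmDiff

theorem Finset.abs_sum_symmDiff_sub_sum_le {ι M : Type*} [AddCommGroup M] [LinearOrder M]
    [IsOrderedAddMonoid M] [DecidableEq ι] {f : ι → M} {s t : Finset ι}
    (hf : ∀ i ∈ s, 0 ≤ f i) :
    |∑ i ∈ s ∆ t, f i - ∑ i ∈ t, f i| ≤ ∑ i ∈ s, f i := by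
  have hsymm : ∑ i ∈ s ∆ t, f i - ∑ i ∈ t, f i = ∑ i ∈ s \ t, f i - ∑ i ∈ s ∩ t, f i := by
    rw [symmDiff_def, sup_eq_union, sum_union disjoint_sdiff_sdiff,
      ← sum_inter_add_sum_sdiff t s, inter_comm]
    abel
  have hdiff : 0 ≤ ∑ i ∈ s \ t, f i := sum_nonneg fun i hi => hf i (mem_sdiff.1 hi).1
  have hinter : 0 ≤ ∑ i ∈ s ∩ t, f i := sum_nonneg fun i hi => hf i (mem_inter.1 hi).1
  rw [hsymm, ← sum_inter_add_sum_sdiff s t, add_comm]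
  exact (abs_sub _ _).trans_eq (by rw [abs_of_nonneg hdiff, abs_of_nonneg hinter])

lemma cntR_union {A B : Finset ℤ} (hAB : Disjoint A B) (x : ℤ) :
    cntR (A ∪ B) x = cntR A x + cntR B x := by
  rw [cntR, Finset.filter_union, Finset.card_union_of_disjoint (Finset.disjoint_filter_filter hAB)]
  rfl

lemma mem_Iminus_iff {S : Finset ℤ} (hS : Even S.card) {x : ℤ} :
    x ∈ Iminus S ↔ Odd (cntR S x) := by
  refine ⟨fun hx => (Finset.mem_filter.1 hx).2, fun hx => Finset.mem_filter.2 ⟨?_, hx⟩⟩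
  obtain ⟨k, hk⟩ : (S.filter fun k => x ≤ k).Nonempty := Finset.card_pos.1 hx.pos
  obtain ⟨hkS, hxk⟩ := Finset.mem_filter.1 hk
  have hne : S.Nonempty := ⟨k, hkS⟩
  rw [← Finset.coe_min' hne, ← Finset.coe_max' hne, Finset.mem_Icc]
  refine ⟨?_, hxk.trans (S.le_max' k hkS)⟩
  by_contra! hlt
  -- every flip lies to the right of `x`, so the count is the even `S.card`
  rw [cntR, Finset.filter_true_of_mem fun y hy => hlt.le.trans (S.min'_le y hy)] at hx
  exact Nat.not_odd_iff_even.2 hS hx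

lemma Iminus_union {A B : Finset ℤ} (hAB : Disjoint A B) (hA : Even A.card) (hB : Even B.card) :
    Iminus (A ∪ B) = Iminus A ∆ Iminus B := by
  have hAB' : Even (A ∪ B).card := by rw [Finset.card_union_of_disjoint hAB]; exact hA.add hB
  ext x
  rw [Finset.mem_symmDiff, mem_Iminus_iff hAB', mem_Iminus_iff hA, mem_Iminus_iff hB,
    cntR_union hAB, Nat.odd_add', ← Nat.not_odd_iff_even]
  tauto

lemma even_card_sup {Γ : Finset (Finset ℤ)} (hev : ∀ g ∈ Γ, Even g.card)
    (hd : (Γ : Set (Finset ℤ)).PairwiseDisjoint id) :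
    Even (Γ.sup id).card := by
  rw [Finset.sup_eq_biUnion, Finset.card_biUnion fun _ hx _ hy hxy => hd hx hy hxy]
  exact Finset.even_sum _ hev

lemma NSet_eq_Iminus_symmDiff_NSet_erase {Γ : Finset (Finset ℤ)} (hev : ∀ g ∈ Γ, Even g.card)
    (hd : (Γ : Set (Finset ℤ)).PairwiseDisjoint id) {γ : Finset ℤ} (hγ : γ ∈ Γ) :
    NSet Γ = Iminus γ ∆ NSet (Γ.erase γ) := by
  have hdisj : Disjoint γ ((Γ.erase γ).sup id) := Finset.disjoint_sup_right.2 fun g hg =>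
    hd hγ (Finset.mem_of_mem_erase hg) (Finset.ne_of_mem_erase hg).symm
  have hsup : Γ.sup id = γ ∪ (Γ.erase γ).sup id := by
    conv_lhs => rw [← Finset.insert_erase hγ]
    rw [Finset.sup_insert]
    rfl
  rw [NSet, NSet, hsup, Iminus_union hdisj (hev γ hγ)]
  exact even_card_sup (fun g hg => hev g (Finset.mem_of_mem_erase hg))
    (hd.subset fun _ => Finset.mem_of_mem_erase)

theorem field_energy_estimate_general (h : ℤ → ℝ) (hpos : ∀ x, 0 ≤ h x)
    (Γ : Finset (Finset ℤ)) (hwo : WellOrdered Γ)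
    (γ : Finset ℤ) (hγ : γ ∈ Γ) :
    |2 * ∑ x ∈ NSet Γ, h x - 2 * ∑ x ∈ NSet (Γ.erase γ), h x|
      ≤ 2 * ∑ x ∈ Iminus γ, h x := by
  obtain ⟨hne, hd, -⟩ := hwo
  rw [NSet_eq_Iminus_symmDiff_NSet_erase (fun g hg => (hne g hg).2) hd hγ, ← mul_sub, abs_mul,
    abs_two]
  exact mul_le_mul_of_nonneg_left (Finset.abs_sum_symmDiff_sub_sum_le fun x _ => hpos x)
    zero_le_two

/-- the field energy `E_h(Γ) = 2∑_{x∈N(Γ)} h_x` changes by at most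
`E_h(γ) = 2∑_{x∈I₋(γ)} h_x` when an external member `γ` is removed. -/
theorem field_energy_estimate (h : ℤ → ℝ) (hpos : ∀ x, 0 ≤ h x)
    (Γ : Finset (Finset ℤ)) (hwo : WellOrdered Γ)
    (γ : Finset ℤ) (hγ : γ ∈ Γ) (hext : ∀ γ' ∈ Γ, ¬ltC γ γ') :
    |2 * ∑ x ∈ NSet Γ, h x - 2 * ∑ x ∈ NSet (Γ.erase γ), h x|
      ≤ 2 * ∑ x ∈ Iminus γ, h x :=
  field_energy_estimate_general h hpos Γ hwo γ hγ
end
end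

section
/- Let M > 1 and 1 < a < 2, and define s(n) = ⌊(n − log₂(8M))/a⌋ and n̄ = ⌈a + log₂(8M)⌉. Then for every nonempty spin-flip collection γ and every integer n with n̄ ≤ n ≤ n₀(γ), |𝒾ₙ(γ)| ≤ (1/2)|𝒾_{s(n)}(γ)| + (1/2)|𝒾'_{s(n)}(γ)|. -/
noncomputable section
open scoped Classical

/-- The isolated intervals `𝒾'ₙ(γ)`. -/
def isoCover (M a : ℝ) (n : ℕ) (γ : Finset ℤ) : Finset ℤ :=
  (cover n γ).filter fun u => ∀ u' ∈ cover n γ, u' ≠ u →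
    2 * M * (2 : ℝ) ^ (a * n) ≤ |(u : ℝ) - (u' : ℝ)| - 2 ^ n

/-- The scale-connecting function `s(n) = ⌊(n − log₂(8M))/a⌋`. -/
def sM (M a : ℝ) (n : ℕ) : ℤ := ⌊((n : ℝ) - Real.logb 2 (8 * M)) / a⌋

/-!
Write `m = s(n)`. The left endpoints of `𝒾ₙ(γ)` are `2ⁿ` apart, and each lies within `2^m` of
a left endpoint of `𝒾_m(γ)`. Group the intervals of `𝒾_m(γ)` according to the interval of
`𝒾ₙ(γ)` whose left endpoint is closer than `2ⁿ/2`: the groups are disjoint and nonempty. A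
group with a single member `u` is isolated, since every other `u'` is then at distance at least
`2ⁿ/2 - 2^m`, and the choice of `s(n)` gives `2M·2^{am} + 2·2^m ≤ 2ⁿ/2`. Thus every interval
of `𝒾ₙ(γ)` contributes at least `2` to `|𝒾_m(γ)| + |𝒾'_m(γ)|`.
-/

open Finset

lemma coverAux_subset (n fuel : ℕ) (γ : Finset ℤ) : coverAux n fuel γ ⊆ γ := by
  induction fuel generalizing γ with
  | zero => simp [coverAux]
  | succ k ih =>
    intro u hu
    rw [coverAux] at hu
    split_ifs at hu with h
    · rcases mem_insert.1 hu with rfl | hu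
      · exact γ.min'_mem h
      · exact filter_subset _ _ (ih _ hu)
    · simp at hu

lemma exists_mem_coverAux_le_lt (n fuel : ℕ) (γ : Finset ℤ) (hfuel : #γ ≤ fuel) {x : ℤ}
    (hx : x ∈ γ) : ∃ u ∈ coverAux n fuel γ, u ≤ x ∧ x < u + 2 ^ n := by
  induction fuel generalizing γ with
  | zero => simp_all
  | succ k ih =>
    have h : γ.Nonempty := ⟨x, hx⟩
    rw [coverAux, dif_pos h]
    by_cases hlt : x < γ.min' h + 2 ^ n
    · exact ⟨γ.min' h, mem_insert_self _ _, γ.min'_le x hx, hlt⟩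
    · have hrest : #(γ.filter fun y => γ.min' h + 2 ^ n ≤ y) ≤ k := by
        have hssub : (γ.filter fun y => γ.min' h + 2 ^ n ≤ y) ⊂ γ :=
          filter_ssubset.2 ⟨γ.min' h, γ.min'_mem h,
            not_le.2 (lt_add_of_pos_right _ (by positivity))⟩
        have := card_lt_card hssub
        omega
      obtain ⟨u, hu, hux⟩ := ih _ hrest (mem_filter.2 ⟨hx, not_lt.1 hlt⟩)
      exact ⟨u, mem_insert_of_mem hu, hux⟩

lemma coverAux_add_pow_le (n fuel : ℕ) (γ : Finset ℤ) {u v : ℤ} (hu : u ∈ coverAux n fuel γ)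
    (hv : v ∈ coverAux n fuel γ) (huv : u < v) : u + 2 ^ n ≤ v := by
  induction fuel generalizing γ with
  | zero => simp [coverAux] at hu
  | succ k ih =>
    rw [coverAux] at hu hv
    split_ifs at hu hv with h
    · have hrest : ∀ w ∈ coverAux n k (γ.filter fun x => γ.min' h + 2 ^ n ≤ x),
          γ.min' h + 2 ^ n ≤ w := fun w hw => (mem_filter.1 (coverAux_subset n k _ hw)).2
      rcases mem_insert.1 hu with rfl | hu <;> rcases mem_insert.1 hv with rfl | hv
      · exact absurd huv (lt_irrefl _)
      · exact hrest v hv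
      · linarith [hrest u hu]
      · exact ih _ hu hv
    · simp at hu

lemma cover_subset (n : ℕ) (γ : Finset ℤ) : cover n γ ⊆ γ := coverAux_subset _ _ _

lemma exists_mem_cover_dist_lt (n : ℕ) {γ : Finset ℤ} {x : ℤ} (hx : x ∈ γ) :
    ∃ u ∈ cover n γ, dist u x < 2 ^ n := by
  obtain ⟨u, hu, hux, hxu⟩ := exists_mem_coverAux_le_lt n #γ γ le_rfl hx
  refine ⟨u, hu, ?_⟩
  rw [Int.dist_eq', abs_sub_comm, abs_of_nonneg (sub_nonneg.2 hux)]
  exact_mod_cast sub_lt_iff_lt_add'.2 hxu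

lemma pow_le_dist_of_mem_cover {n : ℕ} {γ : Finset ℤ} {u v : ℤ} (hu : u ∈ cover n γ)
    (hv : v ∈ cover n γ) (huv : u ≠ v) : (2 : ℝ) ^ n ≤ dist u v := by
  rw [Int.dist_eq']
  have : (2 : ℤ) ^ n ≤ |u - v| := by
    rcases huv.lt_or_gt with h | h
    · have := coverAux_add_pow_le n #γ γ hu hv h
      rw [abs_sub_comm, abs_of_nonneg (by omega)]; omega
    · have := coverAux_add_pow_le n #γ γ hv hu h
      rw [abs_of_nonneg (by omega)]; omega
  exact_mod_cast this

lemma mem_isoCover {M a : ℝ} {n : ℕ} {γ : Finset ℤ} {u : ℤ} :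
    u ∈ isoCover M a n γ ↔
      u ∈ cover n γ ∧ ∀ u' ∈ cover n γ, u' ≠ u → 2 * M * (2 : ℝ) ^ (a * n) ≤ dist u u' - 2 ^ n :=
  mem_filter

lemma Finset.mul_card_le_card_add_card_of_pairwiseDisjoint {ι α : Type*} {k : ℕ} {C : Finset ι} {D D' : Finset α}
    {S : ι → Finset α} (hS : ∀ v ∈ C, S v ⊆ D) (hdisj : (C : Set ι).PairwiseDisjoint S)
    (hk : ∀ v ∈ C, k ≤ #(S v) + #(S v ∩ D')) : k * #C ≤ #D + #D' := by
  have hdisj' : (C : Set ι).PairwiseDisjoint fun v => S v ∩ D' :=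
    hdisj.mono fun _ => inter_subset_left
  calc k * #C = ∑ _v ∈ C, k := by rw [sum_const, smul_eq_mul, mul_comm]
    _ ≤ ∑ v ∈ C, (#(S v) + #(S v ∩ D')) := sum_le_sum hk
    _ = #(C.biUnion S) + #(C.biUnion fun v => S v ∩ D') := by
        rw [card_biUnion hdisj, card_biUnion hdisj', sum_add_distrib]
    _ ≤ #D + #D' := add_le_add (card_le_card (biUnion_subset.2 hS))
        (card_le_card (biUnion_subset.2 fun _ _ => inter_subset_right))

theorem two_mul_card_le_card_add_card_of_pairwiseDisjoint_of_isolated {α : Type*} [PseudoMetricSpace α]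
    {C D D' : Finset α} {ρ δ : ℝ} (hδ : δ < ρ)
    (hC : ∀ v ∈ C, ∀ w ∈ C, v ≠ w → 2 * ρ ≤ dist v w)
    (hD : ∀ v ∈ C, ∃ u ∈ D, dist u v ≤ δ)
    (hD' : ∀ u ∈ D, (∀ u' ∈ D, u' ≠ u → ρ - δ ≤ dist u u') → u ∈ D') :
    2 * #C ≤ #D + #D' := by
  refine mul_card_le_card_add_card_of_pairwiseDisjoint (S := fun v => D.filter (dist · v < ρ))
    (fun _ _ => filter_subset _ _) ?_ ?_
  · intro v hv w hw hvw
    refine disjoint_left.2 fun x hxv hxw => ?_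
    simp only [mem_filter] at hxv hxw
    linarith [hC v hv w hw hvw, hxv.2, hxw.2, dist_triangle v x w, dist_comm x v]
  · intro v hv
    obtain ⟨u, huD, huv⟩ := hD v hv
    have hu : u ∈ D.filter (dist · v < ρ) := mem_filter.2 ⟨huD, by linarith⟩
    rcases eq_singleton_or_nontrivial hu with hsingle | hnontriv
    · have hiso : u ∈ D' := by
        refine hD' u huD fun u' hu' hne => ?_
        have hfar : ρ ≤ dist u' v := by
          by_contra! hlt
          have : u' ∈ D.filter (dist · v < ρ) := mem_filter.2 ⟨hu', hlt⟩
          simp [hsingle, hne] at this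
        linarith [dist_triangle_left u' v u]
      simp [hsingle, hiso]
    · have := one_lt_card_iff_nontrivial.2 hnontriv
      omega

lemma eight_mul_mul_rpow_sM_le {M a : ℝ} (hM : 0 < M) (ha : 0 < a) {n : ℕ}
    (hn : Real.logb 2 (8 * M) ≤ n) :
    8 * M * (2 : ℝ) ^ (a * (sM M a n).toNat) ≤ 2 ^ n := by
  set L := Real.logb 2 (8 * M)
  have hm : ((sM M a n).toNat : ℝ) ≤ (n - L) / a := by
    have hmax : ((sM M a n).toNat : ℝ) = max ((sM M a n : ℤ) : ℝ) 0 := by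
      exact_mod_cast Int.toNat_eq_max (sM M a n)
    rw [hmax]
    exact max_le (Int.floor_le _) (div_nonneg (by linarith) ha.le)
  have h2L : (2 : ℝ) ^ L = 8 * M := Real.rpow_logb two_pos (by norm_num) (by linarith)
  calc 8 * M * (2 : ℝ) ^ (a * (sM M a n).toNat)
      ≤ 8 * M * (2 : ℝ) ^ ((n : ℝ) - L) := by
        gcongr
        · norm_num
        · rwa [le_div_iff₀' ha] at hm
    _ = 2 ^ n := by
        rw [Real.rpow_sub two_pos, h2L, Real.rpow_natCast]
        field_simp

theorem cover_recursion_general (M a : ℝ) (hM : 1 < M) (ha1 : 1 < a)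
    (γ : Finset ℤ)
    (n : ℕ) (hn1 : (⌈a + Real.logb 2 (8 * M)⌉ : ℤ) ≤ (n : ℤ)) :
    ((cover n γ).card : ℝ)
      ≤ 1 / 2 * ((cover (sM M a n).toNat γ).card : ℝ)
        + 1 / 2 * ((isoCover M a (sM M a n).toNat γ).card : ℝ) := by
  set m := (sM M a n).toNat
  have hn : a + Real.logb 2 (8 * M) ≤ n := by exact_mod_cast Int.ceil_le.1 hn1
  have hscale : 8 * M * (2 : ℝ) ^ (a * m) ≤ 2 ^ n :=
    eight_mul_mul_rpow_sM_le (by linarith) (by linarith) (by linarith)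
  have hm : (2 : ℝ) ^ m ≤ 2 ^ (a * m) := by
    rw [← Real.rpow_natCast]
    exact Real.rpow_le_rpow_of_exponent_le one_le_two (le_mul_of_one_le_left m.cast_nonneg ha1.le)
  have hfine : 8 * (2 : ℝ) ^ m ≤ 2 ^ n := by nlinarith [Real.rpow_nonneg zero_le_two (a * m)]
  have key : 2 * #(cover n γ) ≤ #(cover m γ) + #(isoCover M a m γ) :=
    two_mul_card_le_card_add_card_of_pairwiseDisjoint_of_isolated (ρ := 2 ^ n / 2) (δ := 2 ^ m)
      (by linarith [pow_pos (two_pos : (0 : ℝ) < 2) m])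
      (fun u hu v hv huv => by linarith [pow_le_dist_of_mem_cover hu hv huv])
      (fun v hv => (exists_mem_cover_dist_lt m (cover_subset n γ hv)).imp
        fun _ h => ⟨h.1, h.2.le⟩)
      (fun u hu hfar => mem_isoCover.2 ⟨hu, fun u' hu' hne => by linarith [hfar u' hu' hne]⟩)
  have : 2 * (#(cover n γ) : ℝ) ≤ #(cover m γ) + #(isoCover M a m γ) := by exact_mod_cast key
  linarith

/-- the recursive cover-size relation
`|𝒾ₙ(γ)| ≤ ½|𝒾_{s(n)}(γ)| + ½|𝒾'_{s(n)}(γ)|` for `n̄ ≤ n ≤ n₀(γ)`, where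
`n̄ = ⌈a + log₂(8M)⌉` (note `s(n) ≥ 1` in this range, so `(s n).toNat = s n`). -/
theorem cover_recursion (M a : ℝ) (hM : 1 < M) (ha1 : 1 < a) (ha2 : a < 2)
    (γ : Finset ℤ) (hne : γ.Nonempty) (heven : Even γ.card)
    (n : ℕ) (hn1 : (⌈a + Real.logb 2 (8 * M)⌉ : ℤ) ≤ (n : ℤ)) (hn2 : n ≤ n0 γ) :
    ((cover n γ).card : ℝ)
      ≤ 1 / 2 * ((cover (sM M a n).toNat γ).card : ℝ)
        + 1 / 2 * ((isoCover M a (sM M a n).toNat γ).card : ℝ) :=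
  cover_recursion_general M a hM ha1 γ n hn1
end
end

section
/- Let a > 0 and b ≥ 1 be reals and let φ:ℕ_{≥1}→ℕ_{≥1} satisfy |{m : φ(m) = N}| ≤ b·e^{aN} for every N ≥ 1. Then for every integer R ≥ 1, ∑_{n=1}^{∞} |{(m₁,…,mₙ) ∈ ℕ_{≥1}ⁿ : ∑_{k=1}^{n} φ(m_k) ≤ R}| ≤ e^{(a + log(2b))·R}. -/
/-!
Peeling off the first entry of a tuple, whose weight `N` has at most `b e^{aN}` preimages,
gives by induction on the length `n` at most `C(R, n) bⁿ e^{aR}` tuples of weight `≤ R`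
(`C(R, n)` is the number of ways to write a number `≤ R` as an ordered sum of `n` positive
parts). These counts vanish for `n > R`, and summing over `n ≥ 1` gives at most
`((1 + b)^R - 1) e^{aR} ≤ (2b)^R e^{aR}`.
-/

open Finset Real

theorem sum_range_choose_eq_choose_succ (n R : ℕ) :
    ∑ M ∈ range R, M.choose n = R.choose (n + 1) := by
  induction R with
  | zero => simp
  | succ R ih => rw [sum_range_succ, ih, Nat.choose_succ_succ', add_comm]

theorem sum_Icc_choose_sub_eq_choose_succ (n R : ℕ) :
    ∑ N ∈ Icc 1 R, (R - N).choose n = R.choose (n + 1) := by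
  rw [← Ico_add_one_right_eq_Icc, sum_Ico_eq_sum_range, Nat.add_sub_cancel,
    ← sum_range_choose_eq_choose_succ, ← sum_range_reflect (fun M => M.choose n)]
  simp only [Nat.sub_sub]

theorem sum_range_choose_succ_mul_pow_succ_le (b : ℝ) (R : ℕ) :
    ∑ n ∈ range R, (R.choose (n + 1) : ℝ) * b ^ (n + 1) ≤ (1 + b) ^ R := by
  rw [add_comm, add_pow, sum_range_succ']
  simp [mul_comm]

section BoundedWeightTuples

variable {α : Type*} (s : Set α) (w : α → ℕ)

def boundedWeightTuples (n R : ℕ) : Set (Fin n → α) :=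
  {v | (∀ k, v k ∈ s) ∧ ∑ k, w (v k) ≤ R}

variable {s w}

theorem boundedWeightTuples_succ_subset (hw : ∀ x ∈ s, 1 ≤ w x) (n R : ℕ) :
    boundedWeightTuples s w (n + 1) R ⊆ ⋃ N ∈ Icc 1 R,
      Function.uncurry Fin.cons '' ({x ∈ s | w x = N} ×ˢ boundedWeightTuples s w n (R - N)) := by
  rintro v ⟨hvs, hvR⟩
  rw [Fin.sum_univ_succ] at hvR
  have hv0 := hw _ (hvs 0)
  simp only [Set.mem_iUnion]
  exact ⟨w (v 0), mem_Icc.2 ⟨hv0, by omega⟩, (v 0, Fin.tail v),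
    ⟨⟨hvs 0, rfl⟩, fun k => hvs k.succ, by simp only [Fin.tail]; omega⟩, Fin.cons_self_tail v⟩

theorem boundedWeightTuples_finite (hw : ∀ x ∈ s, 1 ≤ w x)
    (hfin : ∀ N, 1 ≤ N → {x ∈ s | w x = N}.Finite) :
    ∀ n R, (boundedWeightTuples s w n R).Finite
  | 0, _ => Set.toFinite _
  | n + 1, R => by
    refine Set.Finite.subset ?_ (boundedWeightTuples_succ_subset hw n R)
    exact (Icc 1 R).finite_toSet.biUnion fun N hN =>
      ((hfin N (mem_Icc.1 hN).1).prod (boundedWeightTuples_finite hw hfin n (R - N))).image _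

theorem ncard_boundedWeightTuples_succ_le (hw : ∀ x ∈ s, 1 ≤ w x)
    (hfin : ∀ N, 1 ≤ N → {x ∈ s | w x = N}.Finite) (n R : ℕ) :
    (boundedWeightTuples s w (n + 1) R).ncard ≤
      ∑ N ∈ Icc 1 R, {x ∈ s | w x = N}.ncard * (boundedWeightTuples s w n (R - N)).ncard := by
  calc _ ≤ _ := Set.ncard_le_ncard (boundedWeightTuples_succ_subset hw n R) <|
        (Icc 1 R).finite_toSet.biUnion fun N hN =>
          ((hfin N (mem_Icc.1 hN).1).prod (boundedWeightTuples_finite hw hfin n _)).image _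
    _ ≤ _ := set_ncard_biUnion_le _ _
    _ = _ := by
      simp only [Set.ncard_image_of_injective _ Fin.cons_injective2.uncurry, Set.ncard_prod]

theorem ncard_boundedWeightTuples_le {a b : ℝ} (ha : 0 ≤ a) (hb : 0 ≤ b)
    (hw : ∀ x ∈ s, 1 ≤ w x)
    (hcount : ∀ N : ℕ, 1 ≤ N → {x ∈ s | w x = N}.Finite ∧
      (({x ∈ s | w x = N}.ncard : ℝ) ≤ b * exp (a * N))) (n R : ℕ) :
    ((boundedWeightTuples s w n R).ncard : ℝ) ≤ R.choose n * b ^ n * exp (a * R) := by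
  induction n generalizing R with
  | zero =>
    have h1 : ((boundedWeightTuples s w 0 R).ncard : ℝ) ≤ 1 :=
      mod_cast Set.ncard_le_one_of_subsingleton _
    simpa using h1.trans (one_le_exp (by positivity))
  | succ n ih =>
    calc ((boundedWeightTuples s w (n + 1) R).ncard : ℝ)
        ≤ ∑ N ∈ Icc 1 R, ({x ∈ s | w x = N}.ncard : ℝ) *
            (boundedWeightTuples s w n (R - N)).ncard :=
          mod_cast ncard_boundedWeightTuples_succ_le hw (fun N hN => (hcount N hN).1) n R
      _ ≤ ∑ N ∈ Icc 1 R, b * exp (a * N) * ((R - N).choose n * b ^ n * exp (a * (R - N : ℕ))) := by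
          gcongr with N hN
          · exact (hcount N (mem_Icc.1 hN).1).2
          · exact ih _
      _ = ∑ N ∈ Icc 1 R, ((R - N).choose n : ℝ) * b ^ (n + 1) * exp (a * R) := by
          refine sum_congr rfl fun N hN => ?_
          have hexp : exp (a * N) * exp (a * (R - N : ℕ)) = exp (a * R) := by
            rw [← exp_add, Nat.cast_sub (mem_Icc.1 hN).2]
            ring_nf
          linear_combination ((R - N).choose n : ℝ) * b ^ (n + 1) * hexp
      _ = R.choose (n + 1) * b ^ (n + 1) * exp (a * R) := by
          rw [← sum_mul, ← sum_mul, ← Nat.cast_sum, sum_Icc_choose_sub_eq_choose_succ]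

end BoundedWeightTuples

theorem tuple_count_bound_general (a b : ℝ) (ha : 0 < a) (hb : 1 ≤ b) (φ : ℕ → ℕ)
    (hφ1 : ∀ m : ℕ, 1 ≤ m → 1 ≤ φ m)
    (hcount : ∀ N : ℕ, 1 ≤ N → {m : ℕ | 1 ≤ m ∧ φ m = N}.Finite ∧
      (({m : ℕ | 1 ≤ m ∧ φ m = N}.ncard : ℝ) ≤ b * Real.exp (a * N)))
    (R : ℕ) :
    (∀ n : ℕ, {v : Fin (n + 1) → ℕ | (∀ k, 1 ≤ v k) ∧ ∑ k, φ (v k) ≤ R}.Finite) ∧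
    Summable (fun n : ℕ =>
      ({v : Fin (n + 1) → ℕ | (∀ k, 1 ≤ v k) ∧ ∑ k, φ (v k) ≤ R}.ncard : ℝ)) ∧
    ∑' n : ℕ, ({v : Fin (n + 1) → ℕ | (∀ k, 1 ≤ v k) ∧ ∑ k, φ (v k) ≤ R}.ncard : ℝ)
      ≤ Real.exp ((a + Real.log (2 * b)) * R) := by
  have hbound (n : ℕ) := ncard_boundedWeightTuples_le ha.le (zero_le_one.trans hb) hφ1 hcount
    (n + 1) R
  have hvanish (n : ℕ) (hn : n ∉ range R) :
      ((boundedWeightTuples {m | 1 ≤ m} φ (n + 1) R).ncard : ℝ) = 0 := by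
    refine le_antisymm ((hbound n).trans_eq ?_) (Nat.cast_nonneg _)
    rw [Nat.choose_eq_zero_of_lt (by simpa using hn), Nat.cast_zero, zero_mul, zero_mul]
  refine ⟨fun n => boundedWeightTuples_finite hφ1 (fun N hN => (hcount N hN).1) (n + 1) R,
    summable_of_ne_finset_zero hvanish, ?_⟩
  calc ∑' n, ((boundedWeightTuples {m | 1 ≤ m} φ (n + 1) R).ncard : ℝ)
      = ∑ n ∈ range R, ((boundedWeightTuples {m | 1 ≤ m} φ (n + 1) R).ncard : ℝ) :=
        tsum_eq_sum hvanish
    _ ≤ (∑ n ∈ range R, (R.choose (n + 1) : ℝ) * b ^ (n + 1)) * exp (a * R) := by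
        rw [sum_mul]
        exact sum_le_sum fun n _ => hbound n
    _ ≤ (1 + b) ^ R * exp (a * R) := by
        gcongr
        exact sum_range_choose_succ_mul_pow_succ_le b R
    _ ≤ (2 * b) ^ R * exp (a * R) := by gcongr; linarith
    _ = exp ((a + log (2 * b)) * R) := by
        rw [add_mul, exp_add, mul_comm (log _), exp_nat_mul, exp_log (by linarith), mul_comm]

/-- counting tuples of positive integers with bounded `φ`-sum.
Tuples of length `n ≥ 1` are encoded as functions `Fin (n+1) → ℕ` (all entries `≥ 1`),
the series over all lengths `n ≥ 1` being the `tsum` over `n : ℕ` of the count for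
length `n + 1`.  Since the counted sets are finite and only finitely many lengths
contribute, the statement also asserts finiteness and summability. -/
theorem tuple_count_bound (a b : ℝ) (ha : 0 < a) (hb : 1 ≤ b) (φ : ℕ → ℕ)
    (hφ1 : ∀ m : ℕ, 1 ≤ m → 1 ≤ φ m)
    (hcount : ∀ N : ℕ, 1 ≤ N → {m : ℕ | 1 ≤ m ∧ φ m = N}.Finite ∧
      (({m : ℕ | 1 ≤ m ∧ φ m = N}.ncard : ℝ) ≤ b * Real.exp (a * N)))
    (R : ℕ) (hR : 1 ≤ R) :
    (∀ n : ℕ, {v : Fin (n + 1) → ℕ | (∀ k, 1 ≤ v k) ∧ ∑ k, φ (v k) ≤ R}.Finite) ∧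
    Summable (fun n : ℕ =>
      ({v : Fin (n + 1) → ℕ | (∀ k, 1 ≤ v k) ∧ ∑ k, φ (v k) ≤ R}.ncard : ℝ)) ∧
    ∑' n : ℕ, ({v : Fin (n + 1) → ℕ | (∀ k, 1 ≤ v k) ∧ ∑ k, φ (v k) ≤ R}.ncard : ℝ)
      ≤ Real.exp ((a + Real.log (2 * b)) * R) :=
  tuple_count_bound_general a b ha hb φ hφ1 hcount R
end

section
/- Let K > 0 and 0 < μ < ν < 1 be reals, and define ȳ = (μ/(Kν))^{1/(ν−μ)} · [ ((1−ν)/(1−μ))^{(1−ν)/(ν−μ)} − ((1−ν)/(1−μ))^{(1−μ)/(ν−μ)} ]. Then for all reals x ≥ 1 and y ≥ 1 with y > ȳ, one has K·x^ν − ((x+y)^μ − (y+1)^μ) ≥ 0. -/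
/-!
Put `f t = K t ^ ν - (t + y) ^ μ`. The inequality `f' t ≥ 0` amounts to
`(μ / (K ν)) ^ (1 / (1 - μ)) * t ^ c ≤ t + y` with `c = (1 - ν) / (1 - μ) < 1`, and by Young's
inequality the left side exceeds `t` by at most a constant, which is exactly `ȳ`. Hence `f` is
monotone on `[0, ∞)`, and `f x ≥ f 1 = K - (y + 1) ^ μ` gives the claim with `K` to spare.
-/

open Real Set

/-- Young's inequality; the constant is optimal, with equality at `t = (c * B) ^ (1 - c)⁻¹`. -/
theorem mul_rpow_le_add_of_lt_one {c B t : ℝ} (hc₀ : 0 < c) (hc₁ : c < 1) (hB : 0 ≤ B)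
    (ht : 0 ≤ t) :
    B * t ^ c ≤ t + (1 - c) * c ^ (c / (1 - c)) * B ^ (1 - c)⁻¹ := by
  have h1c : 0 < 1 - c := sub_pos.2 hc₁
  set s := (c * B) ^ (1 - c)⁻¹ with hs_def
  have hs : s ^ (1 - c) = c * B := rpow_inv_rpow (by positivity) h1c.ne'
  have amgm : t ^ c * s ^ (1 - c) ≤ c * t + (1 - c) * s :=
    geom_mean_le_arith_mean2_weighted hc₀.le h1c.le ht (by positivity) (by ring)
  have hsc : s / c = c ^ (c / (1 - c)) * B ^ (1 - c)⁻¹ := by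
    have hexp : (1 - c)⁻¹ - 1 = c / (1 - c) := by field_simp; ring
    rw [hs_def, mul_rpow hc₀.le hB, mul_div_right_comm, ← rpow_sub_one hc₀.ne', hexp]
  calc B * t ^ c = t ^ c * s ^ (1 - c) / c := by rw [hs]; field_simp
    _ ≤ (c * t + (1 - c) * s) / c := by gcongr
    _ = t + (1 - c) * (s / c) := by field_simp
    _ = _ := by rw [hsc, mul_assoc]

noncomputable def minmaxThreshold (K μ ν : ℝ) : ℝ :=
  (μ / (K * ν)) ^ ((1 : ℝ) / (ν - μ)) *
    (((1 - ν) / (1 - μ)) ^ ((1 - ν) / (ν - μ)) - ((1 - ν) / (1 - μ)) ^ ((1 - μ) / (ν - μ)))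

section

variable {K μ ν : ℝ}

theorem rpow_mul_rpow_le_add_minmaxThreshold (hK : 0 < K) (hμ : 0 < μ) (hμν : μ < ν)
    (hν : ν < 1) {t : ℝ} (ht : 0 ≤ t) :
    (μ / (K * ν)) ^ (1 - μ)⁻¹ * t ^ ((1 - ν) / (1 - μ)) ≤ t + minmaxThreshold K μ ν := by
  have h1μ : 0 < 1 - μ := by linarith
  have hνμ : 0 < ν - μ := by linarith
  have hq : 0 ≤ μ / (K * ν) := div_nonneg hμ.le (mul_pos hK (hμ.trans hμν)).le
  have hc₀ : 0 < (1 - ν) / (1 - μ) := div_pos (by linarith) h1μ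
  have hc₁ : (1 - ν) / (1 - μ) < 1 := (div_lt_one h1μ).2 (by linarith)
  convert mul_rpow_le_add_of_lt_one hc₀ hc₁ (rpow_nonneg hq _) ht using 2
  have h1c : 1 - (1 - ν) / (1 - μ) = (ν - μ) / (1 - μ) := by field_simp; ring
  have hexpB : (1 - μ)⁻¹ * (1 - (1 - ν) / (1 - μ))⁻¹ = 1 / (ν - μ) := by
    rw [h1c]; field_simp
  have hexpc : (1 - ν) / (1 - μ) / (1 - (1 - ν) / (1 - μ)) = (1 - ν) / (ν - μ) := by
    rw [h1c]; field_simp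
  have hexp : (1 - μ) / (ν - μ) = (1 - ν) / (ν - μ) + 1 := by field_simp; ring
  rw [minmaxThreshold, ← rpow_mul hq, hexpB, hexpc, hexp, rpow_add hc₀, rpow_one]
  ring

theorem add_pos_of_minmaxThreshold_le (hK : 0 < K) (hμ : 0 < μ) (hμν : μ < ν) (hν : ν < 1)
    {t y : ℝ} (ht : 0 < t) (hy : minmaxThreshold K μ ν ≤ y) : 0 < t + y := by
  have hν₀ : 0 < ν := hμ.trans hμν
  have := rpow_mul_rpow_le_add_minmaxThreshold hK hμ hμν hν ht.le
  have : 0 < (μ / (K * ν)) ^ (1 - μ)⁻¹ * t ^ ((1 - ν) / (1 - μ)) := by positivity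
  linarith

theorem mul_rpow_add_le_of_minmaxThreshold_le (hK : 0 < K) (hμ : 0 < μ) (hμν : μ < ν)
    (hν : ν < 1) {t y : ℝ} (ht : 0 < t) (hy : minmaxThreshold K μ ν ≤ y) :
    μ * (t + y) ^ (μ - 1) ≤ K * ν * t ^ (ν - 1) := by
  have h1μ : 0 < 1 - μ := by linarith
  have hKν : 0 < K * ν := mul_pos hK (hμ.trans hμν)
  have hq : 0 ≤ μ / (K * ν) := div_nonneg hμ.le hKν.le
  have hty := add_pos_of_minmaxThreshold_le hK hμ hμν hν ht hy
  have hpow : μ / (K * ν) * t ^ (1 - ν) ≤ (t + y) ^ (1 - μ) := by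
    have hB := (rpow_mul_rpow_le_add_minmaxThreshold hK hμ hμν hν ht.le).trans
      (add_le_add_right hy t)
    calc μ / (K * ν) * t ^ (1 - ν)
        = ((μ / (K * ν)) ^ (1 - μ)⁻¹ * t ^ ((1 - ν) / (1 - μ))) ^ (1 - μ) := by
          rw [mul_rpow (by positivity) (by positivity), rpow_inv_rpow hq h1μ.ne',
            ← rpow_mul ht.le, div_mul_cancel₀ _ h1μ.ne']
      _ ≤ (t + y) ^ (1 - μ) := by gcongr
  rw [show μ - 1 = -(1 - μ) by ring, show ν - 1 = -(1 - ν) by ring, rpow_neg hty.le,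
    rpow_neg ht.le, ← div_eq_mul_inv, ← div_eq_mul_inv,
    div_le_div_iff₀ (by positivity) (by positivity)]
  rw [div_mul_eq_mul_div, div_le_iff₀ hKν] at hpow
  linarith

theorem monotoneOn_sub_rpow_add_of_minmaxThreshold_le (hK : 0 < K) (hμ : 0 < μ) (hμν : μ < ν)
    (hν : ν < 1) {y : ℝ} (hy : minmaxThreshold K μ ν ≤ y) :
    MonotoneOn (fun t ↦ K * t ^ ν - (t + y) ^ μ) (Ici 0) := by
  have hν₀ : 0 < ν := hμ.trans hμν
  have hderiv : ∀ t > 0,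
      HasDerivAt (fun t ↦ K * t ^ ν - (t + y) ^ μ)
        (K * (ν * t ^ (ν - 1)) - 1 * μ * (t + y) ^ (μ - 1)) t := fun t ht ↦
    ((hasDerivAt_rpow_const (Or.inl ht.ne')).const_mul K).sub
      (((hasDerivAt_id' t).add_const y).rpow_const
        (Or.inl (add_pos_of_minmaxThreshold_le hK hμ hμν hν ht hy).ne'))
  refine monotoneOn_of_deriv_nonneg (convex_Ici 0) ?_ ?_ ?_
  · intro t _
    exact ((continuousAt_const.mul (continuousAt_rpow_const t ν (Or.inr hν₀.le))).sub
      ((continuousAt_id.add continuousAt_const).rpow_const (Or.inr hμ.le))).continuousWithinAt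
  · rw [interior_Ici]
    exact fun t ht ↦ (hderiv t ht).differentiableAt.differentiableWithinAt
  · rw [interior_Ici]
    intro t ht
    rw [(hderiv t ht).deriv]
    linarith [mul_rpow_add_le_of_minmaxThreshold_le hK hμ hμν hν ht hy]

end

theorem minmax_exponent_general (K μ ν : ℝ) (hK : 0 < K) (hμ : 0 < μ) (hμν : μ < ν) (hν : ν < 1)
    (x y : ℝ) (hx : 1 ≤ x)
    (hybar : (μ / (K * ν)) ^ ((1 : ℝ) / (ν - μ)) *
        (((1 - ν) / (1 - μ)) ^ ((1 - ν) / (ν - μ)) -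
          ((1 - ν) / (1 - μ)) ^ ((1 - μ) / (ν - μ))) < y) :
    0 ≤ K * x ^ ν - ((x + y) ^ μ - (y + 1) ^ μ) := by
  have hmono := monotoneOn_sub_rpow_add_of_minmaxThreshold_le hK hμ hμν hν hybar.le
  have h1x : K * 1 ^ ν - (1 + y) ^ μ ≤ K * x ^ ν - (x + y) ^ μ :=
    hmono (mem_Ici.2 zero_le_one) (mem_Ici.2 (zero_le_one.trans hx)) hx
  rw [one_rpow, add_comm 1 y] at h1x
  linarith

/-- the min-max lemma on exponents (Lemma `expoentes`).
All powers are real powers (`Real.rpow`) of positive reals. -/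
theorem minmax_exponent (K μ ν : ℝ) (hK : 0 < K) (hμ : 0 < μ) (hμν : μ < ν) (hν : ν < 1)
    (x y : ℝ) (hx : 1 ≤ x) (hy : 1 ≤ y)
    (hybar : (μ / (K * ν)) ^ ((1 : ℝ) / (ν - μ)) *
        (((1 - ν) / (1 - μ)) ^ ((1 - ν) / (ν - μ)) -
          ((1 - ν) / (1 - μ)) ^ ((1 - μ) / (ν - μ))) < y) :
    0 ≤ K * x ^ ν - ((x + y) ^ μ - (y + 1) ^ μ) :=
  minmax_exponent_general K μ ν hK hμ hμν hν x y hx hybar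
end
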